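/- arXiv:2511.10267 — 8 statements merged into one kernel-verified Lean document; each statement's English description precedes it below -/
import Mathlib

section
/- Norm bound on the evolution operator for nonnegative real part (Eq. (norm_len1), time-independent form): Let H and L be Hermitian d×d complex matrices, let α ∈ ℝ satisfy ⟨v, L v⟩ ≤ α‖v‖² for all v ∈ ℂᵈ, let t ≥ 0, and let z ∈ ℂ with Re z ≥ 0. Then the spectral norm of the matrix exponential satisfies ‖exp(t·(iH + zL))‖ ≤ exp(t · Re(z) · α). -/
/-!
For Hermitian `H` and `L`, the quadratic form of `A = t (iH + zL)` has real part
`t Re z ⟨v, Lv⟩ ≤ t Re z α ‖v‖²`: the `iH` term and the imaginary part of `z` only contribute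
imaginary parts. Any `A` with `Re ⟨x, Ax⟩ ≤ c ‖x‖²` satisfies `‖exp A‖ ≤ exp c`, since along
`u s = exp (s A) x` we have `(‖u‖²)' = 2 Re ⟨u, Au⟩ ≤ 2c ‖u‖²`, and Grönwall's inequality
gives `‖u 1‖ ≤ exp c ‖x‖`.
-/

open Matrix Complex
open scoped Real Matrix.Norms.L2Operator InnerProductSpace

theorem le_mul_exp_of_hasDerivAt_le_mul {f f' : ℝ → ℝ} {K : ℝ}
    (hf : ∀ s, HasDerivAt f (f' s) s) (hK : ∀ s, f' s ≤ K * f s) {s : ℝ} (hs : 0 ≤ s) :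
    f s ≤ f 0 * Real.exp (K * s) := by
  have := le_gronwallBound_of_liminf_deriv_right_le (δ := f 0) (ε := 0)
    (fun x _ => (hf x).continuousAt.continuousWithinAt)
    (fun x _ r hr => by simpa [slope_def_field, div_eq_inv_mul] using
      (hf x).hasDerivWithinAt.liminf_right_slope_le hr)
    le_rfl (fun x _ => by simpa using hK x) s ⟨hs, le_rfl⟩
  simpa [gronwallBound_ε0] using this

theorem norm_le_norm_mul_exp_of_hasDerivAt_of_inner_le {F : Type*} [NormedAddCommGroup F]
    [InnerProductSpace ℝ F] {u u' : ℝ → F} {c : ℝ} (hu : ∀ s, HasDerivAt u (u' s) s)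
    (hc : ∀ s, ⟪u s, u' s⟫_ℝ ≤ c * ‖u s‖ ^ 2) {s : ℝ} (hs : 0 ≤ s) :
    ‖u s‖ ≤ ‖u 0‖ * Real.exp (c * s) := by
  have hsq : ‖u s‖ ^ 2 ≤ ‖u 0‖ ^ 2 * Real.exp (2 * c * s) :=
    le_mul_exp_of_hasDerivAt_le_mul (fun s => (hu s).norm_sq) (fun s => by linarith [hc s]) hs
  refine (pow_le_pow_iff_left₀ (norm_nonneg _) (by positivity) two_ne_zero).mp ?_
  calc ‖u s‖ ^ 2 ≤ ‖u 0‖ ^ 2 * Real.exp (2 * c * s) := hsq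
    _ = (‖u 0‖ * Real.exp (c * s)) ^ 2 := by
      rw [mul_pow, ← Real.exp_nat_mul]; push_cast; ring_nf

theorem ContinuousLinearMap.norm_exp_le_of_re_inner_le {E : Type*} [NormedAddCommGroup E]
    [InnerProductSpace ℂ E] [CompleteSpace E] (A : E →L[ℂ] E) {c : ℝ}
    (hA : ∀ x, (⟪x, A x⟫_ℂ).re ≤ c * ‖x‖ ^ 2) : ‖NormedSpace.exp A‖ ≤ Real.exp c := by
  refine opNorm_le_bound _ (Real.exp_pos c).le fun x => ?_
  have hu : ∀ s : ℝ, HasDerivAt (fun s : ℝ => NormedSpace.exp (s • A) x)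
      (A (NormedSpace.exp (s • A) x)) s := fun s => by
    simpa [Function.comp_def] using ((apply ℂ E x).restrictScalars ℝ).hasFDerivAt.comp_hasDerivAt s
      (hasDerivAt_exp_smul_const' A s)
  let := InnerProductSpace.complexToReal (G := E)
  have := norm_le_norm_mul_exp_of_hasDerivAt_of_inner_le hu
    (fun s => by rw [real_inner_eq_re_inner]; exact hA _) zero_le_one
  simpa [mul_comm] using this

theorem Matrix.norm_exp_le_of_re_star_dotProduct_mulVec_le {n : Type*} [Fintype n]
    [DecidableEq n] (A : Matrix n n ℂ) {c : ℝ}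
    (hA : ∀ v : n → ℂ, (star v ⬝ᵥ A *ᵥ v).re ≤ c * (star v ⬝ᵥ v).re) :
    ‖NormedSpace.exp A‖ ≤ Real.exp c := by
  have hcont : Continuous (toEuclideanCLM (n := n) (𝕜 := ℂ)) :=
    LinearMap.continuous_of_finiteDimensional
      (toEuclideanCLM (n := n) (𝕜 := ℂ)).toAlgEquiv.toLinearMap
  rw [cstar_norm_def, NormedSpace.map_exp_of_mem_ball (𝕂 := ℂ) (𝔸 := Matrix n n ℂ)
    (𝔹 := EuclideanSpace ℂ n →L[ℂ] EuclideanSpace ℂ n) _ hcont A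
    ((NormedSpace.expSeries_radius_eq_top ℂ (Matrix n n ℂ)).symm ▸ edist_lt_top _ _)]
  refine ContinuousLinearMap.norm_exp_le_of_re_inner_le _ fun x => ?_
  rw [← inner_self_eq_norm_sq (𝕜 := ℂ)]
  simpa only [EuclideanSpace.inner_eq_star_dotProduct, ofLp_toEuclideanCLM,
    dotProduct_comm (star x.ofLp), RCLike.re_to_complex] using hA x.ofLp

theorem Matrix.IsHermitian.re_star_dotProduct_I_smul_add_smul_mulVec {n : Type*} [Fintype n]
    {H L : Matrix n n ℂ} (hH : H.IsHermitian) (hL : L.IsHermitian) (z : ℂ) (v : n → ℂ) :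
    (star v ⬝ᵥ (I • H + z • L) *ᵥ v).re = z.re * (star v ⬝ᵥ L *ᵥ v).re := by
  have hHim := hH.im_star_dotProduct_mulVec_self v
  have hLim := hL.im_star_dotProduct_mulVec_self v
  rw [RCLike.im_to_complex] at hHim hLim
  simp [add_mulVec, smul_mulVec, dotProduct_add, hHim, hLim]

/-- Norm bound on the evolution operator for nonnegative real part (Eq. (norm_len1),
time-independent form): if `H, L` are Hermitian, `⟨v, L v⟩ ≤ α‖v‖²` for all `v`,
`t ≥ 0` and `Re z ≥ 0`, then `‖exp (t (iH + zL))‖ ≤ exp (t ⬝ Re z ⬝ α)` in the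
spectral (ℓ²→ℓ²) norm. -/
theorem exp_norm_bound_re_nonneg
    (d : ℕ) (H L : Matrix (Fin d) (Fin d) ℂ)
    (hH : H.IsHermitian) (hL : L.IsHermitian)
    (α : ℝ)
    (hα : ∀ v : Fin d → ℂ, (star v ⬝ᵥ L *ᵥ v).re ≤ α * (star v ⬝ᵥ v).re)
    (t : ℝ) (ht : 0 ≤ t) (z : ℂ) (hz : 0 ≤ z.re) :
    ‖NormedSpace.exp ((t : ℂ) • (Complex.I • H + z • L))‖ ≤ Real.exp (t * z.re * α) := by
  refine Matrix.norm_exp_le_of_re_star_dotProduct_mulVec_le _ fun v => ?_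
  calc (star v ⬝ᵥ ((t : ℂ) • (I • H + z • L)) *ᵥ v).re
      = t * z.re * (star v ⬝ᵥ L *ᵥ v).re := by
        rw [smul_mulVec, dotProduct_smul, smul_eq_mul, re_ofReal_mul,
          hH.re_star_dotProduct_I_smul_add_smul_mulVec hL, mul_assoc]
    _ ≤ t * z.re * (α * (star v ⬝ᵥ v).re) :=
        mul_le_mul_of_nonneg_left (hα v) (mul_nonneg ht hz)
    _ = t * z.re * α * (star v ⬝ᵥ v).re := by ring
end

section
/- Norm bound on the evolution operator for nonpositive real part (Eq. (norm_len2), time-independent form): Let H and L be Hermitian d×d complex matrices, let β ∈ ℝ satisfy β‖v‖² ≤ ⟨v, L v⟩ for all v ∈ ℂᵈ, let t ≥ 0, and let z ∈ ℂ with Re z ≤ 0. Then the spectral norm of the matrix exponential satisfies ‖exp(t·(iH + zL))‖ ≤ exp(t · Re(z) · β). -/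
open Matrix Complex
open scoped Matrix.Norms.L2Operator ComplexInnerProductSpace

/-!
If `Re ⟨v, A v⟩ ≤ μ ‖v‖²` for all `v`, then along the flow `w s = exp (s A) v` the derivative of
`‖w s‖²` is `2 Re ⟨w s, A w s⟩`; after shifting `A` by `μ` this is nonpositive, so
`‖exp A‖ ≤ exp μ`. For `A = t (iH + zL)` the Hermitian `H` contributes nothing to `Re ⟨v, A v⟩`
and `Re ⟨v, A v⟩ = t Re z ⟨v, L v⟩ ≤ t Re z β ‖v‖²` because `t Re z ≤ 0`.
-/

theorem antitone_norm_of_inner_deriv_nonpos {F : Type*} [NormedAddCommGroup F]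
    [InnerProductSpace ℝ F] {w w' : ℝ → F} (hw : ∀ s, HasDerivAt w (w' s) s)
    (h : ∀ s, inner ℝ (w s) (w' s) ≤ 0) : Antitone (‖w ·‖) := by
  have hsq : Antitone (‖w ·‖ ^ 2) :=
    antitone_of_deriv_nonpos (fun s => (hw s).norm_sq.differentiableAt)
      (fun s => by rw [(hw s).norm_sq.deriv]; linarith [h s])
  exact fun a b hab =>
    (pow_le_pow_iff_left₀ (norm_nonneg _) (norm_nonneg _) two_ne_zero).mp (hsq hab)

namespace ContinuousLinearMap

variable {E : Type*} [NormedAddCommGroup E] [InnerProductSpace ℂ E] [CompleteSpace E]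

theorem norm_exp_le_one_of_re_inner_nonpos (B : E →L[ℂ] E)
    (hB : ∀ v, (⟪v, B v⟫).re ≤ 0) : ‖NormedSpace.exp B‖ ≤ 1 := by
  let := InnerProductSpace.complexToReal (G := E)
  refine opNorm_le_bound _ zero_le_one fun v => ?_
  have hflow : ∀ s : ℝ, HasDerivAt (fun u : ℝ => NormedSpace.exp (u • B) v)
      (B (NormedSpace.exp (s • B) v)) s := fun s =>
    ((apply ℂ E v).restrictScalars ℝ).hasFDerivAt.comp_hasDerivAt s
      (hasDerivAt_exp_smul_const' B s)
  have hdecay := antitone_norm_of_inner_deriv_nonpos hflow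
    (fun s => (real_inner_eq_re_inner ℂ _ _).trans_le (hB _)) zero_le_one
  simpa using hdecay

theorem norm_exp_le_exp_of_re_inner_le (A : E →L[ℂ] E) (μ : ℝ)
    (hA : ∀ v, (⟪v, A v⟫).re ≤ μ * ‖v‖ ^ 2) : ‖NormedSpace.exp A‖ ≤ Real.exp μ := by
  let : NormedAlgebra ℚ (E →L[ℂ] E) := .restrictScalars ℚ ℝ _
  set B := A - algebraMap ℝ (E →L[ℂ] E) μ
  have hB : ∀ v, (⟪v, B v⟫).re ≤ 0 := fun v => by
    have : (⟪v, B v⟫).re = (⟪v, A v⟫).re - μ * ‖v‖ ^ 2 := by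
      simp [B, Algebra.algebraMap_eq_smul_one, ← Complex.ofReal_pow]
    linarith [hA v]
  have hsplit : NormedSpace.exp A = Real.exp μ • NormedSpace.exp B := by
    rw [← add_sub_cancel (algebraMap ℝ _ μ) A,
      NormedSpace.exp_add_of_commute (Algebra.commutes μ B), ← NormedSpace.algebraMap_exp_comm,
      Real.exp_eq_exp_ℝ, Algebra.smul_def]
  rw [hsplit, norm_smul, Real.norm_of_nonneg (Real.exp_nonneg μ)]
  exact mul_le_of_le_one_right (Real.exp_nonneg μ) (norm_exp_le_one_of_re_inner_nonpos B hB)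

end ContinuousLinearMap

theorem Matrix.norm_exp_le_exp_of_re_dotProduct_le {n : Type*} [Fintype n] [DecidableEq n]
    (A : Matrix n n ℂ) (μ : ℝ)
    (hA : ∀ v : n → ℂ, (star v ⬝ᵥ A *ᵥ v).re ≤ μ * (star v ⬝ᵥ v).re) :
    ‖NormedSpace.exp A‖ ≤ Real.exp μ := by
  let : NormedAlgebra ℚ (Matrix n n ℂ) := .restrictScalars ℚ ℂ _
  rw [cstar_norm_def, NormedSpace.map_exp toEuclideanCLM (LinearMap.continuous_of_finiteDimensional
    (toEuclideanCLM (𝕜 := ℂ) (n := n)).toAlgEquiv.toLinearMap)]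
  refine ContinuousLinearMap.norm_exp_le_exp_of_re_inner_le _ μ fun v => ?_
  rw [← inner_self_eq_norm_sq (𝕜 := ℂ)]
  simpa only [EuclideanSpace.inner_eq_star_dotProduct, ofLp_toEuclideanCLM, dotProduct_comm,
    RCLike.re_to_complex] using hA v.ofLp

/-- Norm bound on the evolution operator for nonpositive real part (Eq. (norm_len2),
time-independent form): if `H, L` are Hermitian, `β‖v‖² ≤ ⟨v, L v⟩` for all `v`,
`t ≥ 0` and `Re z ≤ 0`, then `‖exp (t (iH + zL))‖ ≤ exp (t ⬝ Re z ⬝ β)` in the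
spectral (ℓ²→ℓ²) norm. -/
theorem exp_norm_bound_re_nonpos
    (d : ℕ) (H L : Matrix (Fin d) (Fin d) ℂ)
    (hH : H.IsHermitian) (hL : L.IsHermitian)
    (β : ℝ)
    (hβ : ∀ v : Fin d → ℂ, β * (star v ⬝ᵥ v).re ≤ (star v ⬝ᵥ L *ᵥ v).re)
    (t : ℝ) (ht : 0 ≤ t) (z : ℂ) (hz : z.re ≤ 0) :
    ‖NormedSpace.exp ((t : ℂ) • (Complex.I • H + z • L))‖ ≤ Real.exp (t * z.re * β) := by
  refine Matrix.norm_exp_le_exp_of_re_dotProduct_le _ _ fun v => ?_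
  have hHv : (star v ⬝ᵥ H *ᵥ v).im = 0 := hH.im_star_dotProduct_mulVec_self v
  have hLv : (star v ⬝ᵥ L *ᵥ v).im = 0 := hL.im_star_dotProduct_mulVec_self v
  have hquad : (star v ⬝ᵥ ((t : ℂ) • (Complex.I • H + z • L)) *ᵥ v).re =
      t * z.re * (star v ⬝ᵥ L *ᵥ v).re := by
    simp only [smul_add, add_mulVec, smul_mulVec, dotProduct_add, dotProduct_smul, smul_eq_mul,
      add_re, mul_re, ofReal_re, ofReal_im, I_re, I_im, hHv, hLv]
    ring
  rw [hquad, mul_assoc (t * z.re)]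
  exact mul_le_mul_of_nonpos_left (hβ v) (mul_nonpos_of_nonneg_of_nonpos ht hz)
end

section
/- Exact polynomial decomposition identity (Eq. (poly_series)): Let H and L be Hermitian d×d complex matrices, let p be a polynomial over ℂ of degree at most D, let m ≥ D + 1, and let q₁, …, q_m be pairwise distinct real numbers. Then p evaluated at the matrix iH + L satisfies p(iH + L) = Σ_{r=1}^{m} p(iH + i·q_r·L) · Π_{r'≠r} ((−i − q_{r'})/(q_r − q_{r'})), where p(M) denotes the evaluation Σ_d a_d M^d of the polynomial p = Σ_d a_d x^d at the matrix M. -/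
/-! Every entry of `p(A + z • B)` is a polynomial in `z` of degree at most `deg p`, so Lagrange
interpolation at the `m > deg p` nodes `i q_r` recovers its value at `z = 1`. The Lagrange basis
for the nodes `i q_r`, evaluated at `1`, is the basis for the nodes `q_r` evaluated at
`1 / i = -i`. -/

open Matrix Complex

open Polynomial

section MatrixPencil

variable {R : Type*} [CommRing R] {n : Type*}

noncomputable def matrixPencil (A B : Matrix n n R) : Matrix n n R[X] :=
  A.map C + (X : R[X]) • B.map C

theorem matrixPencil_apply (A B : Matrix n n R) (i j : n) :
    matrixPencil A B i j = C (A i j) + X * C (B i j) := rfl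

theorem matrixPencil_map_eval (A B : Matrix n n R) (z : R) :
    (matrixPencil A B).map (eval z) = A + z • B := by
  ext i j
  simp [matrixPencil_apply, mul_comm (B i j)]

theorem natDegree_matrixPencil_apply_le (A B : Matrix n n R) (i j : n) :
    (matrixPencil A B i j).natDegree ≤ 1 := by
  rw [matrixPencil_apply]
  refine natDegree_add_le_of_degree_le (by simp) ?_
  exact natDegree_mul_le.trans (by simpa using natDegree_X_le)

theorem natDegree_pow_apply_le [Fintype n] [DecidableEq n] {M : Matrix n n R[X]}
    (hM : ∀ i j, (M i j).natDegree ≤ 1) (k : ℕ) (i j : n) : ((M ^ k) i j).natDegree ≤ k := by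
  induction k generalizing i j with
  | zero => by_cases h : i = j <;> simp [one_apply, h]
  | succ k ih =>
    rw [pow_succ, mul_apply]
    refine natDegree_sum_le_of_forall_le _ _ fun l _ => ?_
    exact natDegree_mul_le.trans (add_le_add (ih i l) (hM l j))

theorem natDegree_aeval_matrixPencil_apply_le [Fintype n] [DecidableEq n] (A B : Matrix n n R)
    (p : R[X]) (i j : n) :
    (aeval (matrixPencil A B) p i j).natDegree ≤ p.natDegree := by
  rw [aeval_eq_sum_range, Matrix.sum_apply]
  refine natDegree_sum_le_of_forall_le _ _ fun k hk => ?_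
  refine (natDegree_smul_le _ _).trans ((natDegree_pow_apply_le ?_ k i j).trans ?_)
  · exact natDegree_matrixPencil_apply_le A B
  · exact Nat.lt_succ_iff.mp (Finset.mem_range.mp hk)

theorem eval_aeval_matrixPencil_apply [Fintype n] [DecidableEq n] (A B : Matrix n n R)
    (p : R[X]) (z : R) (i j : n) :
    (aeval (matrixPencil A B) p i j).eval z = aeval (A + z • B) p i j := by
  rw [← matrixPencil_map_eval, ← coe_aeval_eq_eval]
  change (aeval z).mapMatrix (aeval (matrixPencil A B) p) i j = _
  rw [← aeval_algHom_apply]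
  rfl

end MatrixPencil

namespace Lagrange

variable {F : Type*} [Field F] {ι : Type*} [DecidableEq ι]

theorem eval_eq_sum_eval_mul_eval_basis {s : Finset ι} {v : ι → F} (hvs : Set.InjOn v s)
    {f : F[X]} (hf : f.degree < s.card) (x : F) :
    f.eval x = ∑ i ∈ s, f.eval (v i) * (Lagrange.basis s v i).eval x := by
  conv_lhs => rw [eq_interpolate hvs hf]
  simp [interpolate_apply, eval_finsetSum]

theorem eval_basis (s : Finset ι) (v : ι → F) (i : ι) (x : F) :
    (Lagrange.basis s v i).eval x = ∏ j ∈ s.erase i, (x - v j) / (v i - v j) := by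
  simp [Lagrange.basis, basisDivisor, eval_prod, div_eq_inv_mul]

theorem eval_basis_const_mul (s : Finset ι) (v : ι → F) (i : ι) {c : F} (hc : c ≠ 0) (x : F) :
    (Lagrange.basis s (fun j => c * v j) i).eval x = (Lagrange.basis s v i).eval (x / c) := by
  simp only [eval_basis]
  refine Finset.prod_congr rfl fun j _ => ?_
  rw [← mul_sub, ← mul_div_cancel₀ x hc, ← mul_sub, mul_div_mul_left _ _ hc,
    mul_div_cancel_left₀ _ hc]

end Lagrange

theorem Matrix.aeval_add_smul_eq_sum_basis {K : Type*} [Field K] {n : Type*} [Fintype n]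
    [DecidableEq n] {ι : Type*} [Fintype ι] [DecidableEq ι] (A B : Matrix n n K) (p : K[X])
    {v : ι → K} (hv : Function.Injective v) (hp : p.natDegree < Fintype.card ι) (x : K) :
    aeval (A + x • B) p =
      ∑ r, (Lagrange.basis Finset.univ v r).eval x • aeval (A + v r • B) p := by
  ext i j
  have hdeg : (aeval (matrixPencil A B) p i j).degree < (Finset.univ : Finset ι).card :=
    (degree_le_natDegree.trans_lt (WithBot.coe_lt_coe.mpr
      ((natDegree_aeval_matrixPencil_apply_le A B p i j).trans_lt hp)))
  simp only [Matrix.sum_apply, smul_apply, smul_eq_mul, ← eval_aeval_matrixPencil_apply]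
  rw [Lagrange.eval_eq_sum_eval_mul_eval_basis hv.injOn hdeg x]
  simp only [mul_comm]

theorem poly_decomposition_identity_general
    (d : ℕ) (H L : Matrix (Fin d) (Fin d) ℂ)
    (D : ℕ) (p : Polynomial ℂ) (hp : p.natDegree ≤ D)
    (m : ℕ) (hm : D + 1 ≤ m)
    (q : Fin m → ℝ) (hq_inj : Function.Injective q) :
    Polynomial.aeval (Complex.I • H + L) p =
      ∑ r : Fin m,
        (∏ r' ∈ Finset.univ.erase r,
            ((-Complex.I - (q r' : ℂ)) / ((q r : ℂ) - (q r' : ℂ)))) •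
          Polynomial.aeval (Complex.I • H + (Complex.I * (q r : ℂ)) • L) p := by
  have hv : Function.Injective fun r => I * (q r : ℂ) := fun a b h =>
    hq_inj (by simpa [I_ne_zero] using h)
  conv_lhs => rw [← one_smul ℂ L]
  rw [Matrix.aeval_add_smul_eq_sum_basis _ _ p hv (by rw [Fintype.card_fin]; omega) 1]
  refine Finset.sum_congr rfl fun r _ => ?_
  rw [Lagrange.eval_basis_const_mul _ _ _ I_ne_zero, Lagrange.eval_basis, one_div, inv_I]

/-- **Exact polynomial decomposition identity** (Eq. (poly_series)).
For Hermitian `H, L`, a polynomial `p` of degree at most `D`, `m ≥ D + 1`, and pairwise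
distinct real interpolation points `q₁, …, q_m`, the polynomial of the non-Hermitian
matrix `iH + L` is an exact finite linear combination of polynomials of the Hermitian
combinations, `p(iH + L) = ∑ᵣ p(iH + i qᵣ L) ⬝ ∏_{r'≠r} (-i - q_{r'})/(qᵣ - q_{r'})`. -/
theorem poly_decomposition_identity
    (d : ℕ) (H L : Matrix (Fin d) (Fin d) ℂ)
    (hH : H.IsHermitian) (hL : L.IsHermitian)
    (D : ℕ) (p : Polynomial ℂ) (hp : p.natDegree ≤ D)
    (m : ℕ) (hm : D + 1 ≤ m)
    (q : Fin m → ℝ) (hq_inj : Function.Injective q) :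
    Polynomial.aeval (Complex.I • H + L) p =
      ∑ r : Fin m,
        (∏ r' ∈ Finset.univ.erase r,
            ((-Complex.I - (q r' : ℂ)) / ((q r : ℂ) - (q r' : ℂ)))) •
          Polynomial.aeval (Complex.I • H + (Complex.I * (q r : ℂ)) • L) p :=
  poly_decomposition_identity_general d H L D p hp m hm q hq_inj
end

section
/- Factorial lower bound on a shifted product (auxiliary estimate in the proof of Theorem 3): For every natural number m and every real number z, the product over integers r from −m to m of the complex moduli |z + r + i| satisfies Π_{r=−m}^{m} |z + r + i| ≥ (m!)², where i is the imaginary unit. -/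
/-!
The factors are `‖x + j + I‖`, `j = 0, …, 2m`, over a window of `2m + 1` consecutive reals with
centre `c = x + m`. Induct on `m`, removing two factors whose product is at least `m²`: the two
ends when `|c| ≤ 1`, since `Re ((c - m + I) (c + m + I)) = c² - m² - 1`; otherwise the two points at
the end of the window farther from `0`, each of absolute value at least `m`.
-/

open Complex Finset

open scoped Nat

noncomputable def windowProd (n : ℕ) (x : ℝ) : ℝ :=
  ∏ j ∈ range n, ‖(x : ℂ) + j + I‖

lemma windowProd_succ (n : ℕ) (x : ℝ) :
    windowProd (n + 1) x = windowProd n x * ‖(x : ℂ) + n + I‖ :=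
  prod_range_succ _ _

lemma windowProd_succ' (n : ℕ) (x : ℝ) :
    windowProd (n + 1) x = ‖(x : ℂ) + I‖ * windowProd n (x + 1) := by
  rw [windowProd, prod_range_succ', mul_comm]
  congr 1
  · push_cast; ring_nf
  · exact prod_congr rfl fun j _ => by push_cast; ring_nf

lemma abs_le_norm_ofReal_add_I (x : ℝ) : |x| ≤ ‖(x : ℂ) + I‖ := by
  simpa using Complex.abs_re_le_norm ((x : ℂ) + I)

lemma sq_le_norm_sub_add_I_mul_norm_add_add_I {s : ℝ} (hs : |s| ≤ 1) (k : ℝ) :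
    k ^ 2 ≤ ‖(s : ℂ) - k + I‖ * ‖(s : ℂ) + k + I‖ := by
  rw [← norm_mul]
  have hre : (((s : ℂ) - k + I) * ((s : ℂ) + k + I)).re = s ^ 2 - k ^ 2 - 1 := by
    simp only [mul_re, add_re, sub_re, ofReal_re, I_re, add_zero, add_im, sub_im, ofReal_im,
      sub_self, I_im, zero_add, mul_one, sub_left_inj]
    ring
  have hs2 : s ^ 2 ≤ 1 := by nlinarith [abs_nonneg s, sq_abs s]
  calc k ^ 2 ≤ |s ^ 2 - k ^ 2 - 1| := by rw [abs_of_nonpos (by nlinarith)]; linarith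
    _ ≤ _ := hre ▸ Complex.abs_re_le_norm _

lemma sq_le_norm_add_I_mul_norm_add_I {k x y : ℝ} (hk : 0 ≤ k) (hx : k ≤ |x|) (hy : k ≤ |y|) :
    k ^ 2 ≤ ‖(x : ℂ) + I‖ * ‖(y : ℂ) + I‖ := by
  rw [sq]
  exact mul_le_mul (hx.trans (abs_le_norm_ofReal_add_I x)) (hy.trans (abs_le_norm_ofReal_add_I y))
    hk (by positivity)

lemma exists_windowProd_eq_mul (m : ℕ) (x : ℝ) :
    ∃ A B y, ((m : ℝ) + 1) ^ 2 ≤ A * B ∧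
      windowProd (2 * m + 3) x = A * B * windowProd (2 * m + 1) y := by
  have hm : (0 : ℝ) ≤ m + 1 := by positivity
  rcases le_or_gt (x + m + 1) (-1) with hc | hc
  · refine ⟨_, _, x + 1 + 1, sq_le_norm_add_I_mul_norm_add_I (x := x) (y := x + 1) hm
      (by rw [abs_of_neg (by linarith)]; linarith) (by rw [abs_of_neg (by linarith)]; linarith), ?_⟩
    rw [windowProd_succ', windowProd_succ', mul_assoc]
  rcases le_or_gt 1 (x + m + 1) with hc' | hc'
  · refine ⟨_, _, x, sq_le_norm_add_I_mul_norm_add_I (x := x + (2 * m + 1 : ℕ))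
      (y := x + (2 * m + 2 : ℕ)) hm
      (by rw [abs_of_pos (by push_cast; linarith)]; push_cast; linarith)
      (by rw [abs_of_pos (by push_cast; linarith)]; push_cast; linarith), ?_⟩
    rw [windowProd_succ, windowProd_succ]
    push_cast; ring
  · have hs : |x + m + 1| ≤ 1 := abs_le.2 ⟨hc.le, hc'.le⟩
    refine ⟨_, _, x + 1, sq_le_norm_sub_add_I_mul_norm_add_add_I hs ((m : ℝ) + 1), ?_⟩
    rw [windowProd_succ', windowProd_succ]
    push_cast; ring_nf

theorem factorial_sq_le_windowProd (m : ℕ) (x : ℝ) :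
    (m ! : ℝ) ^ 2 ≤ windowProd (2 * m + 1) x := by
  induction m generalizing x with
  | zero => simpa [windowProd] using Complex.abs_im_le_norm ((x : ℂ) + I)
  | succ m ih =>
    obtain ⟨A, B, y, hAB, hsplit⟩ := exists_windowProd_eq_mul m x
    rw [show 2 * (m + 1) + 1 = 2 * m + 3 by ring, hsplit, Nat.factorial_succ, Nat.cast_mul,
      mul_pow]
    push_cast
    exact mul_le_mul hAB (ih y) (by positivity) ((sq_nonneg _).trans hAB)

/-- **Factorial lower bound on a shifted product** (auxiliary estimate in the proof of
Theorem 3). For every natural `m` and real `z`,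
`∏_{r=-m}^{m} |z + r + i| ≥ (m!)²`. -/
theorem prod_abs_shift_ge_factorial_sq (m : ℕ) (z : ℝ) :
    ((Nat.factorial m : ℝ)) ^ 2 ≤
      ∏ r ∈ Finset.Icc (-(m : ℤ)) (m : ℤ), ‖(z : ℂ) + (r : ℂ) + Complex.I‖ := by
  have hwindow : ∏ r ∈ Icc (-(m : ℤ)) m, ‖(z : ℂ) + r + I‖ = windowProd (2 * m + 1) (z - m) := by
    rw [Int.Icc_eq_finset_map, prod_map, show ((m : ℤ) + 1 - -m).toNat = 2 * m + 1 by omega]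
    refine prod_congr rfl fun j _ => ?_
    change ‖(z : ℂ) + ((-(m : ℤ) + j : ℤ) : ℂ) + I‖ = _
    push_cast; ring_nf
  exact hwindow ▸ factorial_sq_le_windowProd m (z - m)
end

section
/- Bounded ratio product (auxiliary estimate in the proof of Theorem 3): For every natural number m, Π_{r=1}^{m} (r² + 4)/(r² + 1) ≤ sinh(2π)/(2π). Consequently the full symmetric product satisfies Π_{r=−m}^{m} √((r² + 4)/(r² + 1)) ≤ sinh(2π)/π. -/
/-!
Each factor satisfies `(r² + 4)/(r² + 1) ≤ 1 + 2²/r²`, and the partial products of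
`∏ (1 + 2²/r²)` increase to `sinh (2π)/(2π)`: this is Euler's product for
`sin (π z)/(π z)` at the imaginary point `z = 2i`. The factors of the symmetric product are
even in `r`, so its square roots pair up into the one-sided product, times the factor `2`
at `r = 0`.
-/

open scoped Real
open Filter Finset Topology

theorem Real.tendsto_euler_sinh_prod {x : ℝ} (hx : x ≠ 0) :
    Tendsto (fun n : ℕ => ∏ j ∈ range n, (1 + x ^ 2 / ((j : ℝ) + 1) ^ 2)) atTop
      (𝓝 (Real.sinh (π * x) / (π * x))) := by
  have hπxI : (π * x * Complex.I : ℂ) ≠ 0 := by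
    have : (π * x : ℂ) ≠ 0 := by exact_mod_cast mul_ne_zero Real.pi_ne_zero hx
    exact mul_ne_zero this Complex.I_ne_zero
  have euler := (Complex.tendsto_euler_sin_prod (x * Complex.I)).const_mul (π * x * Complex.I)⁻¹
  have hlim : (π * x * Complex.I : ℂ)⁻¹ * Complex.sin (π * (x * Complex.I)) =
      ((Real.sinh (π * x) / (π * x) : ℝ) : ℂ) := by
    rw [← mul_assoc, Complex.sin_mul_I]
    push_cast
    field_simp
  rw [hlim] at euler
  refine (Complex.continuous_re.tendsto _ |>.comp euler).congr fun n => ?_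
  have hprod : (∏ j ∈ range n, (1 - (x * Complex.I) ^ 2 / ((j : ℂ) + 1) ^ 2)) =
      ((∏ j ∈ range n, (1 + x ^ 2 / ((j : ℝ) + 1) ^ 2) : ℝ) : ℂ) := by
    push_cast
    simp [mul_pow, neg_div]
  rw [Function.comp_apply, ← mul_assoc (π : ℂ), inv_mul_cancel_left₀ hπxI, hprod,
    Complex.ofReal_re]

theorem prod_range_le_of_tendsto_of_one_le {f : ℕ → ℝ} {L : ℝ} (hf : ∀ j, 1 ≤ f j)
    (hL : Tendsto (fun n => ∏ j ∈ range n, f j) atTop (𝓝 L)) (n : ℕ) :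
    ∏ j ∈ range n, f j ≤ L :=
  Monotone.ge_of_tendsto (fun _ _ hab => prod_le_prod_of_subset_of_one_le
    (range_subset_range.2 hab) (fun j _ => zero_le_one.trans (hf j)) fun j _ _ => hf j) hL n

theorem Real.prod_Icc_one_add_sq_div_sq_le {x : ℝ} (hx : x ≠ 0) (m : ℕ) :
    ∏ r ∈ Icc 1 m, (1 + x ^ 2 / (r : ℝ) ^ 2) ≤ Real.sinh (π * x) / (π * x) := by
  rw [← Ico_add_one_right_eq_Icc, prod_Ico_eq_prod_range, add_tsub_cancel_right]
  refine prod_range_le_of_tendsto_of_one_le (fun j => ?_) ?_ m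
  · exact le_add_of_nonneg_right (by positivity)
  · simpa [add_comm] using Real.tendsto_euler_sinh_prod hx

theorem div_add_one_le_one_add_div {a t : ℝ} (ha : 0 ≤ a) (ht : 0 < t) :
    (t + a) / (t + 1) ≤ 1 + a / t := by
  rw [one_add_div ht.ne']
  exact div_le_div_of_nonneg_left (by positivity) ht (by linarith)

theorem Finset.prod_Icc_neg_eq_mul_sq {M : Type*} [CommMonoid M] {f : ℤ → M}
    (hf : ∀ r, f (-r) = f r) (m : ℕ) :
    ∏ r ∈ Icc (-(m : ℤ)) m, f r = f 0 * (∏ r ∈ Icc 1 m, f r) ^ 2 := by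
  induction m with
  | zero => simp
  | succ k ih =>
    have hIcc : Icc (-((k + 1 : ℕ) : ℤ)) (k + 1 : ℕ) =
        insert (-((k : ℤ) + 1)) (insert ((k : ℤ) + 1) (Icc (-(k : ℤ)) k)) := by
      ext; simp only [mem_Icc, mem_insert]; omega
    rw [hIcc, prod_insert (by simp only [mem_Icc, mem_insert]; omega),
      prod_insert (by simp only [mem_Icc]; omega), ih, prod_Icc_succ_top (by omega), hf]
    push_cast
    rw [mul_pow, sq (f _)]
    ac_rfl

theorem Real.prod_Icc_neg_sqrt_eq_sqrt_mul_prod {g : ℤ → ℝ} (hg : ∀ r, g (-r) = g r)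
    (hg0 : ∀ r, 0 ≤ g r) (m : ℕ) :
    ∏ r ∈ Icc (-(m : ℤ)) m, √(g r) = √(g 0) * ∏ r ∈ Icc 1 m, g r := by
  rw [prod_Icc_neg_eq_mul_sq (fun r => by rw [hg]), ← prod_pow]
  simp only [Real.sq_sqrt (hg0 _)]

/-- **Bounded ratio product** (auxiliary estimate in the proof of Theorem 3).
For every natural `m`, `∏_{r=1}^m (r² + 4)/(r² + 1) ≤ sinh(2π)/(2π)`, and consequently
the full symmetric product satisfies
`∏_{r=-m}^{m} √((r² + 4)/(r² + 1)) ≤ sinh(2π)/π`. -/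
theorem prod_ratio_bound (m : ℕ) :
    ∏ r ∈ Finset.Icc 1 m, (((r : ℝ) ^ 2 + 4) / ((r : ℝ) ^ 2 + 1)) ≤
        Real.sinh (2 * π) / (2 * π) ∧
    ∏ r ∈ Finset.Icc (-(m : ℤ)) (m : ℤ),
        Real.sqrt (((r : ℝ) ^ 2 + 4) / ((r : ℝ) ^ 2 + 1)) ≤ Real.sinh (2 * π) / π := by
  have hbound : ∏ r ∈ Icc 1 m, (((r : ℝ) ^ 2 + 4) / ((r : ℝ) ^ 2 + 1)) ≤
      Real.sinh (2 * π) / (2 * π) := calc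
    _ ≤ ∏ r ∈ Icc 1 m, (1 + 4 / (r : ℝ) ^ 2) :=
      prod_le_prod (fun _ _ => by positivity) fun r hr =>
        div_add_one_le_one_add_div zero_le_four (pow_pos (Nat.cast_pos.2 (mem_Icc.1 hr).1) 2)
    _ = ∏ r ∈ Icc 1 m, (1 + 2 ^ 2 / (r : ℝ) ^ 2) := by norm_num
    _ ≤ _ := mul_comm π 2 ▸ Real.prod_Icc_one_add_sq_div_sq_le two_ne_zero m
  have hsqrt_zero : √((((0 : ℤ) : ℝ) ^ 2 + 4) / (((0 : ℤ) : ℝ) ^ 2 + 1)) = 2 := by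
    rw [show (((0 : ℤ) : ℝ) ^ 2 + 4) / (((0 : ℤ) : ℝ) ^ 2 + 1) = 2 ^ 2 by norm_num]
    exact Real.sqrt_sq zero_le_two
  refine ⟨hbound, ?_⟩
  rw [Real.prod_Icc_neg_sqrt_eq_sqrt_mul_prod (fun r => by simp) (fun r => by positivity),
    hsqrt_zero]
  calc _ ≤ 2 * (Real.sinh (2 * π) / (2 * π)) := by push_cast; gcongr
    _ = Real.sinh (2 * π) / π := by field_simp
end

section
/- Tail sum bound for the truncated LCU series (truncation estimate in the proof of Theorem 3): Let a > 0, let m ≥ 1 be a natural number, and let K be a positive integer with K/a ≥ 2m. Then Σ_{k=K+1}^{∞} 1 / (((k/a)² + 1) · Π_{r=1}^{m} ((k/a)² − r²)) ≤ a / (K/a − m)^{2m+1}, where each factor (k/a)² − r² is positive under the stated hypotheses and the series converges. -/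
/-!
For `k/a > m` every factor of the summand is at least `(k/a - m)²`, so the summand is at most
`1/(k/a - m)^(2m+2)`. Since `x^(n+1) - y^(n+1) ≥ (x - y) x^n`, this majorant is at most `a` times
the drop of `1/(t - m)^(2m+1)` as `t` moves from `(k-1)/a` to `k/a`, so the tail telescopes
to at most `a/(K/a - m)^(2m+1)`.
-/

open Finset

lemma sub_mul_pow_le_pow_succ_sub_pow_succ {x y : ℝ} (hy : 0 ≤ y) (hyx : y ≤ x) (n : ℕ) :
    (x - y) * x ^ n ≤ x ^ (n + 1) - y ^ (n + 1) := by
  have := pow_le_pow_left₀ hy hyx n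
  have : x ^ (n + 1) - y ^ (n + 1) - (x - y) * x ^ n = y * (x ^ n - y ^ n) := by ring
  nlinarith

lemma sub_div_pow_add_two_le {x y : ℝ} (hy : 0 < y) (hyx : y ≤ x) (n : ℕ) :
    (x - y) / x ^ (n + 2) ≤ 1 / y ^ (n + 1) - 1 / x ^ (n + 1) := by
  have hx : 0 < x := hy.trans_le hyx
  have hD := sub_mul_pow_le_pow_succ_sub_pow_succ hy.le hyx n
  have hpow : y ^ (n + 1) ≤ x ^ (n + 1) := pow_le_pow_left₀ hy.le hyx _
  rw [div_sub_div _ _ (by positivity) (by positivity), div_le_div_iff₀ (by positivity)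
    (by positivity)]
  calc (x - y) * (y ^ (n + 1) * x ^ (n + 1))
      ≤ (x - y) * (x ^ (n + 1) * x ^ (n + 1)) := by
        gcongr
    _ = (x - y) * x ^ n * x ^ (n + 2) := by ring
    _ ≤ (x ^ (n + 1) - y ^ (n + 1)) * x ^ (n + 2) := by gcongr
    _ = (1 * x ^ (n + 1) - y ^ (n + 1) * 1) * x ^ (n + 2) := by ring

lemma summable_and_tsum_le_of_le_sub_succ {u g : ℕ → ℝ} (hu : ∀ j, 0 ≤ u j)
    (hg : ∀ j, 0 ≤ g j) (h : ∀ j, u j ≤ g j - g (j + 1)) :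
    Summable u ∧ ∑' j, u j ≤ g 0 := by
  have hpartial : ∀ N, ∑ j ∈ range N, u j ≤ g 0 := fun N =>
    calc ∑ j ∈ range N, u j ≤ ∑ j ∈ range N, (g j - g (j + 1)) := sum_le_sum fun j _ => h j
      _ = g 0 - g N := sum_range_sub' g N
      _ ≤ g 0 := sub_le_self _ (hg N)
  have hsum := summable_of_sum_range_le hu hpartial
  exact ⟨hsum, hsum.tsum_le_of_sum_range_le hpartial⟩

lemma summable_and_tsum_one_div_add_pow_le (n : ℕ) {y δ : ℝ} (hy : 0 < y) (hδ : 0 < δ) :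
    Summable (fun j : ℕ => 1 / (y + (j + 1) * δ) ^ (n + 2)) ∧
      ∑' j : ℕ, 1 / (y + (j + 1) * δ) ^ (n + 2) ≤ 1 / (δ * y ^ (n + 1)) := by
  have hY : ∀ j : ℕ, 0 < y + j * δ := fun j => by positivity
  have hstep : ∀ j : ℕ, 1 / (y + (j + 1) * δ) ^ (n + 2) ≤
      1 / (δ * (y + j * δ) ^ (n + 1)) - 1 / (δ * (y + (j + 1 : ℕ) * δ) ^ (n + 1)) := by
    intro j
    have h := sub_div_pow_add_two_le (hY j) (x := y + (j + 1) * δ) (by nlinarith) n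
    rw [show y + (j + 1) * δ - (y + j * δ) = δ by ring] at h
    calc 1 / (y + (j + 1) * δ) ^ (n + 2) = δ / (y + (j + 1) * δ) ^ (n + 2) / δ := by
          field_simp
      _ ≤ (1 / (y + j * δ) ^ (n + 1) - 1 / (y + (j + 1) * δ) ^ (n + 1)) / δ := by gcongr
      _ = _ := by push_cast; field_simp
  simpa using summable_and_tsum_le_of_le_sub_succ (fun j => by positivity)
    (fun j => (one_div_pos.2 (mul_pos hδ (pow_pos (hY j) _))).le) hstep

section LcuFactors

variable {m : ℕ} {x : ℝ}

lemma sq_sub_sq_pos_of_lt (hx : (m : ℝ) < x) {r : ℕ} (hr : r ≤ m) : 0 < x ^ 2 - (r : ℝ) ^ 2 := by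
  have : (r : ℝ) ≤ m := by exact_mod_cast hr
  nlinarith [r.cast_nonneg (α := ℝ)]

lemma sub_pow_le_sq_add_one_mul_prod (hx : (m : ℝ) < x) :
    (x - m) ^ (2 * m + 2) ≤ (x ^ 2 + 1) * ∏ r ∈ Icc 1 m, (x ^ 2 - (r : ℝ) ^ 2) := by
  have hm : (0 : ℝ) ≤ m := m.cast_nonneg
  have hprod : (x - m) ^ (2 * m) ≤ ∏ r ∈ Icc 1 m, (x ^ 2 - (r : ℝ) ^ 2) := by
    calc (x - m) ^ (2 * m) = ∏ _r ∈ Icc 1 m, (x - m) ^ 2 := by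
          rw [prod_const, Nat.card_Icc, Nat.add_sub_cancel, pow_mul]
      _ ≤ ∏ r ∈ Icc 1 m, (x ^ 2 - (r : ℝ) ^ 2) :=
          prod_le_prod (fun _ _ => by positivity) fun r hr => ?_
    have : (r : ℝ) ≤ m := by exact_mod_cast (mem_Icc.1 hr).2
    nlinarith
  rw [pow_add, mul_comm]
  exact mul_le_mul (by nlinarith) hprod (by positivity) (by positivity)

lemma one_div_div_prod_le (hx : (m : ℝ) < x) :
    1 / (x ^ 2 + 1) / ∏ r ∈ Icc 1 m, (x ^ 2 - (r : ℝ) ^ 2) ≤ 1 / (x - m) ^ (2 * m + 2) := by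
  have : 0 < x - m := sub_pos.2 hx
  rw [div_div]
  exact one_div_le_one_div_of_le (by positivity) (sub_pow_le_sq_add_one_mul_prod hx)

lemma one_div_div_prod_nonneg (hx : (m : ℝ) < x) :
    0 ≤ 1 / (x ^ 2 + 1) / ∏ r ∈ Icc 1 m, (x ^ 2 - (r : ℝ) ^ 2) :=
  div_nonneg (by positivity)
    (prod_pos fun _ hr => sq_sub_sq_pos_of_lt hx (mem_Icc.1 hr).2).le

end LcuFactors

def natGtEquiv (K : ℕ) : ℕ ≃ {k : ℕ // K < k} where
  toFun j := ⟨K + 1 + j, by omega⟩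
  invFun k := k.1 - (K + 1)
  left_inv j := by simp
  right_inv k := Subtype.ext (by have := k.2; simp only; omega)

theorem lcu_tail_sum_bound_general
    (a : ℝ) (ha : 0 < a) (m : ℕ)
    (K : ℕ) (hK : 0 < K) (hKa : 2 * (m : ℝ) ≤ (K : ℝ) / a) :
    (∀ k : ℕ, K < k → ∀ r ∈ Finset.Icc 1 m, 0 < ((k : ℝ) / a) ^ 2 - (r : ℝ) ^ 2) ∧
    Summable (fun k : {k : ℕ // K < k} =>
      1 / ((((k : ℕ) : ℝ) / a) ^ 2 + 1) /
        ∏ r ∈ Finset.Icc 1 m, ((((k : ℕ) : ℝ) / a) ^ 2 - (r : ℝ) ^ 2)) ∧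
    (∑' k : {k : ℕ // K < k},
        1 / ((((k : ℕ) : ℝ) / a) ^ 2 + 1) /
          ∏ r ∈ Finset.Icc 1 m, ((((k : ℕ) : ℝ) / a) ^ 2 - (r : ℝ) ^ 2)) ≤
      a / ((K : ℝ) / a - (m : ℝ)) ^ (2 * m + 1) := by
  have hmK : (m : ℝ) < K / a := by
    have : (0 : ℝ) < K / a := by positivity
    linarith
  have hmk : ∀ k : ℕ, K < k → (m : ℝ) < k / a := fun k hk =>
    hmK.trans (by gcongr)
  refine ⟨fun k hk r hr => sq_sub_sq_pos_of_lt (hmk k hk) (mem_Icc.1 hr).2, ?_⟩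
  set F : {k : ℕ // K < k} → ℝ := fun k => 1 / ((((k : ℕ) : ℝ) / a) ^ 2 + 1) /
    ∏ r ∈ Finset.Icc 1 m, ((((k : ℕ) : ℝ) / a) ^ 2 - (r : ℝ) ^ 2)
  obtain ⟨hB, hBsum⟩ :=
    summable_and_tsum_one_div_add_pow_le (2 * m) (sub_pos.2 hmK) (one_div_pos.2 ha)
  have hFB : ∀ j, F (natGtEquiv K j) ≤ 1 / (K / a - m + (j + 1) * (1 / a)) ^ (2 * m + 2) := by
    intro j
    refine (one_div_div_prod_le (hmk (K + 1 + j) (by omega))).trans_eq ?_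
    push_cast
    ring
  have hF0 : ∀ j, 0 ≤ F (natGtEquiv K j) := fun j =>
    one_div_div_prod_nonneg (hmk (K + 1 + j) (by omega))
  have hFsum : Summable (F ∘ natGtEquiv K) := hB.of_nonneg_of_le hF0 hFB
  refine ⟨(natGtEquiv K).summable_iff.1 hFsum, ?_⟩
  calc ∑' k, F k = ∑' j, F (natGtEquiv K j) := ((natGtEquiv K).tsum_eq F).symm
    _ ≤ ∑' j : ℕ, 1 / (K / a - m + (j + 1) * (1 / a)) ^ (2 * m + 2) :=
        hFsum.tsum_le_tsum hFB hB
    _ ≤ 1 / (1 / a * (K / a - m) ^ (2 * m + 1)) := hBsum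
    _ = a / ((K : ℝ) / a - (m : ℝ)) ^ (2 * m + 1) := by field_simp

/-- **Tail sum bound for the truncated LCU series** (truncation estimate in the proof of
Theorem 3). For `a > 0`, `m ≥ 1`, and a positive integer `K` with `K/a ≥ 2m`, each
factor `(k/a)² - r²` appearing in the tail is positive, the tail series
`∑_{k>K} 1/(((k/a)² + 1) ∏_{r=1}^{m} ((k/a)² - r²))` converges, and it is bounded by
`a/(K/a - m)^{2m+1}`. -/
theorem lcu_tail_sum_bound
    (a : ℝ) (ha : 0 < a) (m : ℕ) (hm : 1 ≤ m)
    (K : ℕ) (hK : 0 < K) (hKa : 2 * (m : ℝ) ≤ (K : ℝ) / a) :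
    (∀ k : ℕ, K < k → ∀ r ∈ Finset.Icc 1 m, 0 < ((k : ℝ) / a) ^ 2 - (r : ℝ) ^ 2) ∧
    Summable (fun k : {k : ℕ // K < k} =>
      1 / ((((k : ℕ) : ℝ) / a) ^ 2 + 1) /
        ∏ r ∈ Finset.Icc 1 m, ((((k : ℕ) : ℝ) / a) ^ 2 - (r : ℝ) ^ 2)) ∧
    (∑' k : {k : ℕ // K < k},
        1 / ((((k : ℕ) : ℝ) / a) ^ 2 + 1) /
          ∏ r ∈ Finset.Icc 1 m, ((((k : ℕ) : ℝ) / a) ^ 2 - (r : ℝ) ^ 2)) ≤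
      a / ((K : ℝ) / a - (m : ℝ)) ^ (2 * m + 1) :=
  lcu_tail_sum_bound_general a ha m K hK hKa
end

section
/- Bound on the ℓ¹-weight of the LCU coefficients (coefficient-sum estimate in the proof of Theorem 3): Let a ≥ 1 be real and let m ≥ 1 be a natural number. Then Σ_{k∈ℤ} (Π_{r=1}^{m} (r² + 4)) / (((k/a)² + 1) · Π_{r=−m}^{m} |k/a + r + i|) ≤ a·(π + 1)·sinh(2π)/(2π), where the sum over k ∈ ℤ converges. -/
open Complex Finset Filter
open scoped Real Topology Nat

/-!
Put `z = x + i` with `x = k / a`. Pairing `r` with `-r` gives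
`∏_{|r| ≤ m} |z + r| = (m!)² |z ∏_{j ≤ m} (1 - z²/j²)|`, a partial Euler product of `sin (π z) / π`,
and likewise `∏_{r ≤ m} (r² + 4) = (m!)² ∏_{j ≤ m} (1 + 4/j²)` is a partial Euler product at `2i`;
its factors exceed `1`, so it is at most `sinh (2π) / (2π)`. For any `z` the factors
`|1 - z²/j²|` are first `≥ 1` and then `< 1`, so the partial products are at least
`min (|z|, |sin (π z)| / π)`, which is `≥ 1` for `z = x + i` since `|sin (π z)| ≥ sinh π ≥ π`.
Hence the `k`-th coefficient is at most `(sinh (2π) / (2π)) / (1 + (k/a)²)`, and comparing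
`∑_k 1 / (1 + (k/a)²)` with `∫ dx / (1 + (x/a)²) = π a` bounds the sum by `1 + π a ≤ a (π + 1)`.
-/

lemma le_mul_prod_range_of_tendsto {c : ℕ → ℝ} {b L : ℝ} (hc₀ : ∀ j, 0 ≤ c j) (hb : 0 ≤ b)
    (hc : ∀ i j, i ≤ j → c i < 1 → c j ≤ 1)
    (hL : Tendsto (fun n => b * ∏ j ∈ range n, c j) atTop (𝓝 L)) (m : ℕ) :
    min b L ≤ b * ∏ j ∈ range m, c j := by
  by_cases hbig : ∀ j < m, 1 ≤ c j
  · exact (min_le_left b L).trans <| le_mul_of_one_le_right hb <|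
      one_le_prod fun j hj => hbig j (mem_range.mp hj)
  · push Not at hbig
    obtain ⟨i, him, hi⟩ := hbig
    refine (min_le_right b L).trans <| le_of_tendsto hL <| eventually_atTop.mpr ⟨m, fun n hn => ?_⟩
    rw [← prod_range_mul_prod_Ico c hn, ← mul_assoc]
    refine mul_le_of_le_one_right (mul_nonneg hb (prod_nonneg fun j _ => hc₀ j)) ?_
    exact prod_le_one (fun j _ => hc₀ j) fun j hj => hc i j (him.le.trans (mem_Ico.mp hj).1) hi

lemma mul_prod_range_le_of_tendsto {c : ℕ → ℝ} {b L : ℝ} (hb : 0 ≤ b) (hc : ∀ j, 1 ≤ c j)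
    (hL : Tendsto (fun n => b * ∏ j ∈ range n, c j) atTop (𝓝 L)) (m : ℕ) :
    b * ∏ j ∈ range m, c j ≤ L := by
  refine Monotone.ge_of_tendsto (monotone_nat_of_le_succ fun n => ?_) hL m
  rw [prod_range_succ, ← mul_assoc]
  exact le_mul_of_one_le_right (mul_nonneg hb (prod_nonneg fun j _ => zero_le_one.trans (hc j)))
    (hc n)

/-- The discs `‖w - s‖ < s` grow with `s`. -/
lemma norm_one_sub_div_lt_one_of_le {w : ℂ} {s t : ℝ} (hs : 0 < s) (hst : s ≤ t)
    (h : ‖1 - w / s‖ < 1) : ‖1 - w / t‖ < 1 := by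
  have ht : 0 < t := hs.trans_le hst
  have key : ∀ u : ℝ, 0 < u → ‖1 - w / u‖ = ‖(u : ℂ) - w‖ / u := by
    intro u hu
    rw [one_sub_div (by exact_mod_cast hu.ne'), norm_div, norm_real, Real.norm_of_nonneg hu.le]
  rw [key s hs, div_lt_one hs] at h
  rw [key t ht, div_lt_one ht]
  calc ‖(t : ℂ) - w‖ ≤ ‖(t : ℂ) - s‖ + ‖(s : ℂ) - w‖ := norm_sub_le_norm_sub_add_norm_sub _ _ _
    _ < t := by
      rw [← ofReal_sub, norm_real, Real.norm_of_nonneg (sub_nonneg.mpr hst)]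
      linarith

lemma abs_sinh_le_norm_sin (x y : ℝ) : |Real.sinh y| ≤ ‖sin (x + y * I)‖ := by
  rw [sin_add_mul_I, ← ofReal_sin, ← ofReal_cos, ← ofReal_cosh, ← ofReal_sinh,
    ← ofReal_mul, ← ofReal_mul, norm_add_mul_I]
  apply Real.abs_le_sqrt
  nlinarith [Real.sin_sq_add_cos_sq x, Real.cosh_sq y, sq_nonneg (Real.sin x)]

lemma min_norm_le_norm_mul_prod_euler (z : ℂ) (m : ℕ) :
    min ‖z‖ (‖sin (π * z)‖ / π) ≤ ‖z‖ * ∏ j ∈ range m, ‖1 - z ^ 2 / ((j : ℂ) + 1) ^ 2‖ := by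
  refine le_mul_prod_range_of_tendsto (fun _ => norm_nonneg _) (norm_nonneg _) ?_ ?_ m
  · intro i j hij hi
    have hcast : ∀ k : ℕ, ((k : ℂ) + 1) ^ 2 = (((k : ℝ) + 1) ^ 2 : ℝ) := by intro k; push_cast; rfl
    rw [hcast] at hi ⊢
    exact (norm_one_sub_div_lt_one_of_le (by positivity) (by gcongr) hi).le
  · have := ((continuous_norm.tendsto _).comp (tendsto_euler_sin_prod z)).div_const π
    refine this.congr fun n => ?_
    simp only [Function.comp_apply, norm_mul, norm_prod, norm_real,
      Real.norm_of_nonneg Real.pi_pos.le]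
    field_simp

lemma one_le_norm_mul_prod_euler_add_I (x : ℝ) (m : ℕ) :
    1 ≤ ‖x + I‖ * ∏ j ∈ range m, ‖1 - (x + I) ^ 2 / ((j : ℂ) + 1) ^ 2‖ := by
  refine le_trans ?_ (min_norm_le_norm_mul_prod_euler _ m)
  refine le_min (by simpa using abs_im_le_norm (x + I)) ?_
  have hsin : Real.sinh π ≤ ‖sin (π * (x + I))‖ := by
    have h := abs_sinh_le_norm_sin (π * x) π
    rwa [abs_of_nonneg (Real.sinh_nonneg_iff.mpr Real.pi_pos.le), ofReal_mul, ← mul_add] at h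
  rw [le_div_iff₀ Real.pi_pos, one_mul]
  exact (Real.self_le_sinh_iff.mpr Real.pi_pos.le).trans hsin

lemma prod_one_add_sq_div_le_sinh {y : ℝ} (hy : 0 < y) (m : ℕ) :
    ∏ j ∈ range m, (1 + y ^ 2 / ((j : ℝ) + 1) ^ 2) ≤ Real.sinh (π * y) / (π * y) := by
  have hπy : 0 < π * y := by positivity
  rw [le_div_iff₀ hπy, mul_comm]
  refine mul_prod_range_le_of_tendsto hπy.le (fun j => by simp; positivity) ?_ m
  have hfac : ∀ j : ℕ, ((1 + y ^ 2 / ((j : ℝ) + 1) ^ 2 : ℝ) : ℂ)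
      = 1 - (y * I) ^ 2 / ((j : ℂ) + 1) ^ 2 := by
    intro j; push_cast; rw [mul_pow, I_sq]; ring
  have h : Tendsto (fun n => ((π * y * ∏ j ∈ range n, (1 + y ^ 2 / ((j : ℝ) + 1) ^ 2) : ℝ) : ℂ) * I)
      atTop (𝓝 ((Real.sinh (π * y) : ℂ) * I)) := by
    convert tendsto_euler_sin_prod (y * I) using 2 with n
    · rw [ofReal_mul, ofReal_prod, prod_congr rfl fun j _ => hfac j]; push_cast; ring
    · rw [← mul_assoc, sin_mul_I]; push_cast; rfl
  simpa only [Function.comp_def, mul_I_im, ofReal_re] using (continuous_im.tendsto _).comp h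

lemma prod_Icc_sq_add_four (m : ℕ) :
    ∏ r ∈ Icc 1 m, ((r : ℝ) ^ 2 + 4)
      = (m ! : ℝ) ^ 2 * ∏ j ∈ range m, (1 + 2 ^ 2 / ((j : ℝ) + 1) ^ 2) := by
  induction m with
  | zero => simp
  | succ n ih =>
    rw [prod_Icc_succ_top (by omega), ih, prod_range_succ, Nat.factorial_succ]
    push_cast
    field_simp
    ring

lemma Icc_neg_add_one_eq_insert_insert (n : ℕ) : Icc (-((n : ℤ) + 1)) ((n : ℤ) + 1) =
    insert (-((n : ℤ) + 1)) (insert ((n : ℤ) + 1) (Icc (-(n : ℤ)) n)) := by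
  ext r; simp only [mem_Icc, mem_insert]; omega

lemma prod_Icc_neg_norm_add (z : ℂ) (m : ℕ) :
    ∏ r ∈ Icc (-(m : ℤ)) m, ‖z + r‖
      = (m ! : ℝ) ^ 2 * (‖z‖ * ∏ j ∈ range m, ‖1 - z ^ 2 / ((j : ℂ) + 1) ^ 2‖) := by
  induction m with
  | zero => simp
  | succ n ih =>
    have hpair : ‖z + (-((n : ℤ) + 1) : ℤ)‖ * ‖z + ((n : ℤ) + 1 : ℤ)‖
        = ((n : ℝ) + 1) ^ 2 * ‖1 - z ^ 2 / ((n : ℂ) + 1) ^ 2‖ := by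
      rw [← norm_mul, show ((n : ℝ) + 1) ^ 2 = ‖((n : ℂ) + 1) ^ 2‖ by norm_cast, ← norm_mul,
        ← norm_neg]
      congr 1
      push_cast
      field_simp
      ring
    rw [Nat.cast_succ, Icc_neg_add_one_eq_insert_insert,
      prod_insert (by simp only [mem_insert, mem_Icc]; omega),
      prod_insert (by simp only [mem_Icc]; omega), ih, ← mul_assoc, hpair, prod_range_succ,
      Nat.factorial_succ]
    push_cast
    ring

lemma lcu_coefficient_le (m : ℕ) (x : ℝ) :
    (∏ r ∈ Icc 1 m, ((r : ℝ) ^ 2 + 4)) /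
        ((x ^ 2 + 1) * ∏ r ∈ Icc (-(m : ℤ)) m, ‖(x : ℂ) + r + I‖)
      ≤ Real.sinh (2 * π) / (2 * π) * (1 + x ^ 2)⁻¹ := by
  have hnum : ∏ r ∈ Icc 1 m, ((r : ℝ) ^ 2 + 4)
      ≤ (m ! : ℝ) ^ 2 * (Real.sinh (2 * π) / (2 * π)) := by
    rw [prod_Icc_sq_add_four, mul_comm 2 π]
    gcongr
    exact prod_one_add_sq_div_le_sinh two_pos m
  have hden : (m ! : ℝ) ^ 2 ≤ ∏ r ∈ Icc (-(m : ℤ)) m, ‖(x : ℂ) + r + I‖ := by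
    simp_rw [add_right_comm (x : ℂ) _ I]
    rw [prod_Icc_neg_norm_add]
    exact le_mul_of_one_le_right (by positivity) (one_le_norm_mul_prod_euler_add_I x m)
  calc _ ≤ (m ! : ℝ) ^ 2 * (Real.sinh (2 * π) / (2 * π)) / ((x ^ 2 + 1) * (m ! : ℝ) ^ 2) :=
        div_le_div₀ (by positivity) hnum (by positivity) (by gcongr)
    _ = Real.sinh (2 * π) / (2 * π) * (1 + x ^ 2)⁻¹ := by
        field_simp
        ring

lemma sum_range_inv_one_add_sq_div_le {a : ℝ} (ha : 0 < a) (N : ℕ) :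
    ∑ n ∈ range N, (1 + (((n + 1 : ℕ) : ℝ) / a) ^ 2)⁻¹ ≤ a * (π / 2) := by
  have hanti : AntitoneOn (fun x : ℝ => (1 + (x / a) ^ 2)⁻¹) (Set.Icc 0 (0 + N)) := by
    intro x hx y _ hxy
    have : 0 ≤ x / a := div_nonneg hx.1 ha.le
    dsimp only
    gcongr
  calc ∑ n ∈ range N, (1 + (((n + 1 : ℕ) : ℝ) / a) ^ 2)⁻¹
      ≤ ∫ x in (0 : ℝ)..0 + N, (1 + (x / a) ^ 2)⁻¹ := by
        simpa only [zero_add] using hanti.sum_le_integral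
    _ = a * Real.arctan (N / a) := by
        rw [intervalIntegral.integral_comp_div (fun x => (1 + x ^ 2)⁻¹) ha.ne',
          integral_inv_one_add_sq]
        simp
    _ ≤ a * (π / 2) := by gcongr; exact (Real.arctan_lt_pi_div_two _).le

lemma summable_and_tsum_inv_one_add_sq_div_le {a : ℝ} (ha : 0 < a) :
    Summable (fun k : ℤ => (1 + ((k : ℝ) / a) ^ 2)⁻¹) ∧
      ∑' k : ℤ, (1 + ((k : ℝ) / a) ^ 2)⁻¹ ≤ 1 + π * a := by
  have hnat (N : ℕ) : ∑ n ∈ range N, (1 + (((n : ℤ) : ℝ) / a) ^ 2)⁻¹ ≤ 1 + a * (π / 2) := by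
    cases N with
    | zero => simp only [range_zero, sum_empty]; positivity
    | succ N =>
      rw [sum_range_succ', add_comm]
      simpa using sum_range_inv_one_add_sq_div_le ha N
  have hneg (N : ℕ) :
      ∑ n ∈ range N, (1 + (((-(n + 1) : ℤ) : ℝ) / a) ^ 2)⁻¹ ≤ a * (π / 2) := by
    refine le_of_eq_of_le (sum_congr rfl fun n _ => ?_) (sum_range_inv_one_add_sq_div_le ha N)
    push_cast
    ring
  have hs₁ := summable_of_sum_range_le (fun _ => by positivity) hnat
  have hs₂ := summable_of_sum_range_le (fun _ => by positivity) hneg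
  refine ⟨Summable.of_nat_of_neg_add_one (f := fun k : ℤ => (1 + ((k : ℝ) / a) ^ 2)⁻¹) hs₁ hs₂,
    ?_⟩
  rw [tsum_of_nat_of_neg_add_one (f := fun k : ℤ => (1 + ((k : ℝ) / a) ^ 2)⁻¹) hs₁ hs₂]
  linarith [Real.tsum_le_of_sum_range_le (fun _ => by positivity) hnat,
    Real.tsum_le_of_sum_range_le (fun _ => by positivity) hneg]

theorem lcu_coefficient_sum_bound_general (a : ℝ) (ha : 1 ≤ a) (m : ℕ) :
    Summable (fun k : ℤ =>
      (∏ r ∈ Finset.Icc 1 m, ((r : ℝ) ^ 2 + 4)) /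
        ((((k : ℝ) / a) ^ 2 + 1) *
          ∏ r ∈ Finset.Icc (-(m : ℤ)) (m : ℤ),
            ‖(((k : ℝ) / a : ℝ) : ℂ) + (r : ℂ) + Complex.I‖)) ∧
    (∑' k : ℤ,
        (∏ r ∈ Finset.Icc 1 m, ((r : ℝ) ^ 2 + 4)) /
          ((((k : ℝ) / a) ^ 2 + 1) *
            ∏ r ∈ Finset.Icc (-(m : ℤ)) (m : ℤ),
              ‖(((k : ℝ) / a : ℝ) : ℂ) + (r : ℂ) + Complex.I‖)) ≤
      a * (π + 1) * Real.sinh (2 * π) / (2 * π) := by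
  set S := Real.sinh (2 * π) / (2 * π)
  obtain ⟨hg, hg_le⟩ := summable_and_tsum_inv_one_add_sq_div_le (zero_lt_one.trans_le ha)
  have hle := fun k : ℤ => lcu_coefficient_le m ((k : ℝ) / a)
  have hF := (hg.mul_left S).of_nonneg_of_le (fun k => by positivity) hle
  refine ⟨hF, ?_⟩
  calc _ ≤ ∑' k : ℤ, S * (1 + ((k : ℝ) / a) ^ 2)⁻¹ := hF.tsum_le_tsum hle (hg.mul_left S)
    _ = S * ∑' k : ℤ, (1 + ((k : ℝ) / a) ^ 2)⁻¹ := tsum_mul_left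
    _ ≤ S * (a * (π + 1)) := by gcongr; linarith
    _ = a * (π + 1) * Real.sinh (2 * π) / (2 * π) := by ring

/-- **Bound on the ℓ¹-weight of the LCU coefficients** (coefficient-sum estimate in the
proof of Theorem 3). For real `a ≥ 1` and natural `m ≥ 1`, the sum over `k ∈ ℤ` of
`(∏_{r=1}^{m} (r² + 4)) / (((k/a)² + 1) ∏_{r=-m}^{m} |k/a + r + i|)` converges and is at
most `a(π + 1)·sinh(2π)/(2π)`. -/
theorem lcu_coefficient_sum_bound (a : ℝ) (ha : 1 ≤ a) (m : ℕ) (hm : 1 ≤ m) :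
    Summable (fun k : ℤ =>
      (∏ r ∈ Finset.Icc 1 m, ((r : ℝ) ^ 2 + 4)) /
        ((((k : ℝ) / a) ^ 2 + 1) *
          ∏ r ∈ Finset.Icc (-(m : ℤ)) (m : ℤ),
            ‖(((k : ℝ) / a : ℝ) : ℂ) + (r : ℂ) + Complex.I‖)) ∧
    (∑' k : ℤ,
        (∏ r ∈ Finset.Icc 1 m, ((r : ℝ) ^ 2 + 4)) /
          ((((k : ℝ) / a) ^ 2 + 1) *
            ∏ r ∈ Finset.Icc (-(m : ℤ)) (m : ℤ),
              ‖(((k : ℝ) / a : ℝ) : ℂ) + (r : ℂ) + Complex.I‖)) ≤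
      a * (π + 1) * Real.sinh (2 * π) / (2 * π) :=
  lcu_coefficient_sum_bound_general a ha m
end

section
/- Polynomial approximation error bound via contour integration (Section 6): Let A be a d×d complex matrix, let ρ > 0 satisfy ‖A‖ < ρ in the spectral norm, let f : ℂ → ℂ be continuous on the circle {z : |z| = ρ}, let p be a polynomial over ℂ, and let C_res ≥ 0 and C_f ≥ 0 satisfy ‖(z·I − A)^{−1}‖ ≤ C_res and |f(z) − p(z)| ≤ C_f for all z with |z| = ρ. Then ‖(2πi)^{−1} · ∮_{|z|=ρ} f(z)·(z·I − A)^{−1} dz − p(A)‖ ≤ ρ · C_res · C_f. -/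
/-!
For `‖a‖ < ρ` the resolvent `(z - a)⁻¹` is given on the circle `|z| = ρ` by the Neumann series
`∑ z⁻¹ ^ (n + 1) • a ^ n`, whose terms are bounded uniformly in `z`. Integrating `z ^ k` times it
term by term, only `n = k` survives, so `(2πi)⁻¹ ∮ p(z) (z - a)⁻¹ dz = p(a)` for every polynomial
`p`. The error is therefore `(2πi)⁻¹ ∮ (f - p)(z) (z - A)⁻¹ dz`, which the standard length estimate
bounds by `ρ · C_res · C_f`.
-/

open Matrix Complex Metric
open scoped Real Matrix.Norms.L2Operator

namespace circleIntegral

variable {E : Type*} [NormedAddCommGroup E] [NormedSpace ℂ E]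

theorem hasSum_integral_of_norm_le {ι : Type*} [Countable ι] {F : ι → ℂ → E} {f : ℂ → E}
    {c : ℂ} {R : ℝ} {u : ι → ℝ} (hR : 0 ≤ R) (hF : ∀ n, ContinuousOn (F n) (sphere c R))
    (hu : Summable u) (hFu : ∀ n, ∀ z ∈ sphere c R, ‖F n z‖ ≤ u n)
    (hFf : ∀ z ∈ sphere c R, HasSum (fun n => F n z) (f z)) :
    HasSum (fun n => ∮ z in C(c, R), F n z) (∮ z in C(c, R), f z) := by
  refine intervalIntegral.hasSum_integral_of_dominated_convergence (fun n _ => R * u n)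
    (fun n => ?_) (fun n => ?_) ?_ intervalIntegrable_const ?_
  · have := (hF n).comp_continuous (continuous_circleMap c R) (circleMap_mem_sphere c hR)
    simp only [deriv_circleMap]
    exact (((continuous_circleMap 0 R).mul continuous_const).smul this).aestronglyMeasurable
  · refine Filter.Eventually.of_forall fun θ _ => ?_
    rw [norm_smul, deriv_circleMap, norm_mul, norm_circleMap_zero, abs_of_nonneg hR, norm_I,
      mul_one]
    exact mul_le_mul_of_nonneg_left (hFu n _ (circleMap_mem_sphere c hR θ)) hR
  · exact Filter.Eventually.of_forall fun θ _ => hu.mul_left R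
  · exact Filter.Eventually.of_forall fun θ _ =>
      (hFf _ (circleMap_mem_sphere c hR θ)).const_smul _

theorem integral_pow_mul_inv_pow_succ {R : ℝ} (hR : 0 < R) (k n : ℕ) :
    (∮ z in C(0, R), z ^ k * z⁻¹ ^ (n + 1)) = if n = k then 2 * π * I else 0 := by
  have hzpow : Set.EqOn (fun z : ℂ => z ^ k * z⁻¹ ^ (n + 1))
      (fun z => (z - 0) ^ ((k : ℤ) - (n + 1))) (sphere 0 R) := fun z hz => by
    have hz : z ≠ 0 := ne_zero_of_mem_sphere hR.ne' ⟨z, hz⟩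
    dsimp only
    rw [sub_zero, zpow_sub₀ hz, zpow_natCast, ← Nat.cast_succ, zpow_natCast, div_eq_mul_inv,
      inv_pow]
  rw [integral_congr hR.le hzpow]
  split_ifs with hnk
  · subst hnk
    simpa using integral_sub_inv_of_mem_ball (mem_ball_self hR : (0 : ℂ) ∈ ball 0 R)
  · exact integral_sub_zpow_of_ne (by omega) 0 0 R

end circleIntegral

theorem norm_inv_smul_lt_one {𝕜 F : Type*} [NormedField 𝕜] [NormedAddCommGroup F]
    [NormedSpace 𝕜 F] {x : F} {z : 𝕜} (h : ‖x‖ < ‖z‖) : ‖z⁻¹ • x‖ < 1 := by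
  rwa [norm_smul, norm_inv, inv_mul_lt_one₀ ((norm_nonneg x).trans_lt h)]

section Resolvent

variable {E : Type*} [NormedRing E] [NormedAlgebra ℂ E] [CompleteSpace E] {a : E}

theorem continuousOn_resolvent : ContinuousOn (resolvent a) (resolventSet ℂ a) := fun _ hz =>
  (spectrum.hasDerivAt_resolvent_const_left hz).continuousAt.continuousWithinAt

theorem mem_resolventSet_of_norm_lt_norm {z : ℂ} (h : ‖a‖ < ‖z‖) : z ∈ resolventSet ℂ a := by
  have hz : z ≠ 0 := norm_pos_iff.mp ((norm_nonneg a).trans_lt h)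
  rw [spectrum.mem_resolventSet_iff, Algebra.algebraMap_eq_smul_one]
  simpa using (IsUnit.smul_sub_iff_sub_inv_smul (Units.mk0 z hz) a).mpr
    (isUnit_one_sub_of_norm_lt_one (norm_inv_smul_lt_one h))

theorem hasSum_resolvent_of_norm_lt_norm {z : ℂ} (h : ‖a‖ < ‖z‖) :
    HasSum (fun n : ℕ => z⁻¹ ^ (n + 1) • a ^ n) (resolvent a z) := by
  have hz : z ≠ 0 := norm_pos_iff.mp ((norm_nonneg a).trans_lt h)
  have hres : resolvent a z = z⁻¹ • Ring.inverse (1 - z⁻¹ • a) := by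
    have hscale := spectrum.units_smul_resolvent (r := Units.mk0 z hz) (s := z) (a := a)
    simp only [Units.smul_def, Units.val_inv_eq_inv_val, Units.val_mk0, smul_eq_mul,
      inv_mul_cancel₀ hz] at hscale
    rw [eq_inv_smul_iff₀ hz, hscale, resolvent, map_one]
  rw [hres]
  convert (hasSum_geom_series_inverse _ (norm_inv_smul_lt_one h)).const_smul z⁻¹ using 1
  funext n
  rw [_root_.smul_pow, smul_smul, pow_succ']

theorem circleIntegrable_smul_resolvent {g : ℂ → ℂ} {ρ : ℝ} (hA : ‖a‖ < ρ)
    (hg : ContinuousOn g (sphere 0 ρ)) : CircleIntegrable (fun z => g z • resolvent a z) 0 ρ := by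
  refine (hg.smul (continuousOn_resolvent.mono fun z hz => ?_)).circleIntegrable
    ((norm_nonneg a).trans hA.le)
  exact mem_resolventSet_of_norm_lt_norm (by rwa [mem_sphere_zero_iff_norm.mp hz])

theorem circleIntegral_pow_smul_resolvent {ρ : ℝ} (hA : ‖a‖ < ρ) (k : ℕ) :
    (∮ z in C(0, ρ), z ^ k • resolvent a z) = (2 * π * I : ℂ) • a ^ k := by
  have hρ : 0 < ρ := (norm_nonneg a).trans_lt hA
  have hsum : HasSum (fun n : ℕ => ∮ z in C(0, ρ), (z ^ k * z⁻¹ ^ (n + 1)) • a ^ n)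
      (∮ z in C(0, ρ), z ^ k • resolvent a z) := by
    refine circleIntegral.hasSum_integral_of_norm_le hρ.le
      (u := fun n => ρ ^ k * ρ⁻¹ * ‖((ρ : ℂ)⁻¹ • a) ^ n‖)
      (fun n => ?_) ?_ (fun n z hz => ?_) (fun z hz => ?_)
    · exact ((continuousOn_pow k).mul ((continuousOn_inv₀.mono fun z hz =>
        ne_zero_of_mem_sphere hρ.ne' ⟨z, hz⟩).pow _)).smul continuousOn_const
    · refine (summable_norm_geometric_of_norm_lt_one (norm_inv_smul_lt_one ?_)).mul_left _
      rwa [norm_real, Real.norm_of_nonneg hρ.le]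
    · simp only [_root_.smul_pow, norm_smul, norm_mul, norm_pow, norm_inv, norm_real,
        mem_sphere_zero_iff_norm.mp hz, Real.norm_of_nonneg hρ.le]
      exact le_of_eq (by ring)
    · have hza : ‖a‖ < ‖z‖ := by rwa [mem_sphere_zero_iff_norm.mp hz]
      simpa only [smul_smul] using (hasSum_resolvent_of_norm_lt_norm hza).const_smul (z ^ k)
  have hterm : ∀ n : ℕ, (∮ z in C(0, ρ), (z ^ k * z⁻¹ ^ (n + 1)) • a ^ n) =
      if n = k then (2 * π * I : ℂ) • a ^ k else 0 := fun n => by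
    rw [circleIntegral.integral_smul_const, circleIntegral.integral_pow_mul_inv_pow_succ hρ]
    split_ifs with hnk
    · rw [hnk]
    · exact zero_smul ℂ _
  simp only [hterm] at hsum
  exact hsum.unique (hasSum_ite_eq k _)

theorem circleIntegral_eval_smul_resolvent {ρ : ℝ} (hA : ‖a‖ < ρ) (p : Polynomial ℂ) :
    (∮ z in C(0, ρ), p.eval z • resolvent a z) = (2 * π * I : ℂ) • Polynomial.aeval a p := by
  induction p using Polynomial.induction_on' with
  | add p q hp hq =>
    simp only [Polynomial.eval_add, add_smul, map_add, smul_add]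
    rw [circleIntegral.integral_add (circleIntegrable_smul_resolvent hA p.continuous.continuousOn)
      (circleIntegrable_smul_resolvent hA q.continuous.continuousOn), hp, hq]
  | monomial k c =>
    simp only [Polynomial.eval_monomial, Polynomial.aeval_monomial, mul_smul c]
    rw [circleIntegral.integral_smul, circleIntegral_pow_smul_resolvent hA, ← Algebra.smul_def,
      smul_comm c]

end Resolvent

theorem polynomial_approximation_error_bound_general
    (d : ℕ) (A : Matrix (Fin d) (Fin d) ℂ)
    (ρ : ℝ) (hρ : 0 < ρ) (hA : ‖A‖ < ρ)
    (f : ℂ → ℂ) (hf : ContinuousOn f (Metric.sphere (0 : ℂ) ρ))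
    (p : Polynomial ℂ)
    (Cres Cf : ℝ) (hCres : 0 ≤ Cres)
    (hres : ∀ z : ℂ, ‖z‖ = ρ →
      ‖(z • (1 : Matrix (Fin d) (Fin d) ℂ) - A)⁻¹‖ ≤ Cres)
    (hfp : ∀ z : ℂ, ‖z‖ = ρ → ‖f z - Polynomial.eval z p‖ ≤ Cf) :
    ‖(2 * (π : ℂ) * Complex.I)⁻¹ •
          (∮ z in C(0, ρ), f z • (z • (1 : Matrix (Fin d) (Fin d) ℂ) - A)⁻¹) -
        Polynomial.aeval A p‖ ≤ ρ * Cres * Cf := by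
  have hinv : ∀ z : ℂ, (z • (1 : Matrix (Fin d) (Fin d) ℂ) - A)⁻¹ = resolvent A z := fun z => by
    rw [nonsing_inv_eq_ringInverse, resolvent, Algebra.algebraMap_eq_smul_one]
  simp only [hinv] at hres ⊢
  rw [← inv_smul_smul₀ two_pi_I_ne_zero (Polynomial.aeval A p),
    ← circleIntegral_eval_smul_resolvent hA p, ← smul_sub,
    ← circleIntegral.integral_sub (circleIntegrable_smul_resolvent hA hf)
      (circleIntegrable_smul_resolvent hA p.continuous.continuousOn), mul_assoc ρ]
  refine circleIntegral.norm_two_pi_i_inv_smul_integral_le_of_norm_le_const hρ.le fun z hz => ?_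
  rw [mem_sphere_zero_iff_norm] at hz
  rw [← sub_smul, norm_smul, mul_comm]
  exact mul_le_mul (hres z hz) (hfp z hz) (norm_nonneg _) hCres

/-- **Polynomial approximation error bound via contour integration** (Section 6).
If `‖A‖ < ρ` in the spectral norm, `f` is continuous on the circle of radius `ρ`, and
`‖(zI - A)⁻¹‖ ≤ C_res`, `|f z - p z| ≤ C_f` for all `z` on that circle, then
`‖(2πi)⁻¹ ∮_{|z|=ρ} f(z)(zI - A)⁻¹ dz - p(A)‖ ≤ ρ · C_res · C_f`. -/
theorem polynomial_approximation_error_bound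
    (d : ℕ) (A : Matrix (Fin d) (Fin d) ℂ)
    (ρ : ℝ) (hρ : 0 < ρ) (hA : ‖A‖ < ρ)
    (f : ℂ → ℂ) (hf : ContinuousOn f (Metric.sphere (0 : ℂ) ρ))
    (p : Polynomial ℂ)
    (Cres Cf : ℝ) (hCres : 0 ≤ Cres) (hCf : 0 ≤ Cf)
    (hres : ∀ z : ℂ, ‖z‖ = ρ →
      ‖(z • (1 : Matrix (Fin d) (Fin d) ℂ) - A)⁻¹‖ ≤ Cres)
    (hfp : ∀ z : ℂ, ‖z‖ = ρ → ‖f z - Polynomial.eval z p‖ ≤ Cf) :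
    ‖(2 * (π : ℂ) * Complex.I)⁻¹ •
          (∮ z in C(0, ρ), f z • (z • (1 : Matrix (Fin d) (Fin d) ℂ) - A)⁻¹) -
        Polynomial.aeval A p‖ ≤ ρ * Cres * Cf :=
  polynomial_approximation_error_bound_general d A ρ hρ hA f hf p Cres Cf hCres hres hfp
end
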